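/- arXiv:1806.05562 — 2 statements merged into one kernel-verified Lean document; each statement's English description precedes it below -/
import Mathlib

section
/- Let G = (V, E) be a cactus graph. Then msr(Ḡ) ≤ 5, where Ḡ is the complement of G. -/
/-!
A cactus graph is 2-degenerate: let `u` be the first vertex of a longest path inside a vertex set
`S`, so that all neighbours of `u` in `S` lie on the path. Every neighbour `y` of `u` on the path
other than its successor `v` closes a cycle through the edge `uv`, and two such cycles share that
edge, so they coincide; hence `u` has at most two neighbours in `S`.

A `k`-degenerate graph has an orthogonal representation in any real inner product space of
dimension greater than `2k` in which every `k + 1` vectors are linearly independent: peel off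
a vertex `x` with at most `k` neighbours, represent the rest, and give `x` a vector orthogonal to
its neighbours' (a subspace of dimension `≥ k + 1`) that avoids the finitely many proper
subspaces spanned by `k` old vectors or orthogonal to a non-neighbour. The Gram matrix of a
representation of `G` in `ℝ⁵` then witnesses `msr Gᶜ ≤ 5`.
-/

/-- The minimum semidefinite rank of a simple graph `G` on vertex set `Fin n`:
the minimum rank of a real symmetric positive semidefinite matrix whose
off-diagonal zero/nonzero pattern matches the (non-)adjacency of `G`. -/
noncomputable def msr {n : ℕ} (G : SimpleGraph (Fin n)) : ℕ :=
  sInf { r : ℕ | ∃ A : Matrix (Fin n) (Fin n) ℝ, A.PosSemidef ∧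
    (∀ i j : Fin n, i ≠ j → (A i j ≠ 0 ↔ G.Adj i j)) ∧ A.rank = r }

/-- A cactus graph: a simple connected graph in which every edge belongs to at
most one cycle, i.e. any two cycles sharing a common edge have the same edge set. -/
def IsCactus {n : ℕ} (G : SimpleGraph (Fin n)) : Prop :=
  G.Connected ∧
    ∀ (u w : Fin n) (p : G.Walk u u) (q : G.Walk w w), p.IsCycle → q.IsCycle →
      ∀ e ∈ p.edges, e ∈ q.edges → ∀ e', (e' ∈ p.edges ↔ e' ∈ q.edges)

open scoped InnerProductSpace
open Module

theorem Submodule.exists_mem_forall_notMem_of_not_le {K E : Type*} [DivisionRing K] [Infinite K]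
    [AddCommGroup E] [Module K E] (W : Submodule K E) (T : Finset (Submodule K E))
    (hT : ∀ U ∈ T, ¬ W ≤ U) : ∃ w ∈ W, ∀ U ∈ T, w ∉ U := by
  classical
  have htop : ⊤ ∉ T.image (comap W.subtype) := by
    simp only [Finset.mem_image, not_exists, not_and]
    intro U hU hUtop
    exact hT U hU fun x hx => by
      simpa using (hUtop ▸ mem_top : (⟨x, hx⟩ : W) ∈ U.comap W.subtype)
  obtain ⟨x, hx⟩ :=
    Set.ne_univ_iff_exists_notMem _ |>.mp (Subspace.biUnion_ne_univ_of_top_notMem htop)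
  refine ⟨x, x.2, fun U hU hxU => hx ?_⟩
  simp only [Set.mem_iUnion]
  exact ⟨_, Finset.mem_image_of_mem _ hU, hxU⟩

theorem finrank_span_image_finset_le_card (R : Type*) {ι M : Type*} [Ring R]
    [StrongRankCondition R] [AddCommGroup M] [Module R M] (v : ι → M) (N : Finset ι) :
    finrank R (Submodule.span R (v '' N)) ≤ N.card := by
  classical
  have h := finrank_span_finset_le_card (R := R) (N.image v)
  rw [Finset.coe_image] at h
  exact h.trans Finset.card_image_le

theorem linearIndepOn_update_insert {K ι E : Type*} [DivisionRing K] [AddCommGroup E] [Module K E]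
    [DecidableEq ι] {k : ℕ} {v : ι → E} {S : Finset ι} {x : ι} (hx : x ∉ S) {w : E}
    (hv : ∀ M ⊆ S, M.card ≤ k + 1 → LinearIndepOn K v (M : Set ι))
    (hw : ∀ M ⊆ S, M.card ≤ k → w ∉ Submodule.span K (v '' M)) :
    ∀ M ⊆ insert x S, M.card ≤ k + 1 → LinearIndepOn K (Function.update v x w) (M : Set ι) := by
  intro M hMS hM
  have hupdate : ∀ L ⊆ S, Set.EqOn v (Function.update v x w) L := fun L hL a ha =>
    (Function.update_of_ne (fun h : a = x => hx (h ▸ hL ha)) _ _).symm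
  by_cases hxM : x ∈ M
  · have hL : M.erase x ⊆ S := fun a ha => by
      simpa [(Finset.mem_erase.mp ha).1] using hMS (Finset.mem_of_mem_erase ha)
    rw [← Finset.insert_erase hxM, Finset.coe_insert,
      linearIndepOn_insert (by simp), Function.update_self, ← (hupdate _ hL).image_eq]
    exact ⟨(hv _ hL (by grind [Finset.card_erase_of_mem])).congr (hupdate _ hL),
      hw _ hL (by grind [Finset.card_erase_of_mem])⟩
  · have hL : M ⊆ S := fun a ha => by
      simpa [show a ≠ x from fun h => hxM (h ▸ ha)] using hMS ha
    exact (hv M hL hM).congr (hupdate M hL)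

section InnerProductSpace

variable {ι E : Type*} [NormedAddCommGroup E] [InnerProductSpace ℝ E] [FiniteDimensional ℝ E]

theorem exists_inner_eq_zero_iff_mem_and_notMem_span {k : ℕ} {v : ι → E} {S : Finset ι}
    (hE : 2 * k < finrank ℝ E) (hv : ∀ M ⊆ S, M.card ≤ k + 1 → LinearIndepOn ℝ v (M : Set ι))
    {N : Finset ι} (hNS : N ⊆ S) (hN : N.card ≤ k) :
    ∃ w : E, (∀ j ∈ S, ⟪w, v j⟫_ℝ = 0 ↔ j ∈ N) ∧
      ∀ M ⊆ S, M.card ≤ k → w ∉ Submodule.span ℝ (v '' M) := by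
  classical
  have hW : k < finrank ℝ (Submodule.span ℝ (v '' N))ᗮ := by
    have := (Submodule.span ℝ (v '' N)).finrank_add_finrank_orthogonal
    have := finrank_span_image_finset_le_card ℝ v N
    omega
  set W := (Submodule.span ℝ (v '' N))ᗮ
  have hspan : ∀ M : Finset ι, M.card ≤ k → ¬ W ≤ Submodule.span ℝ (v '' M) := fun M hM hle =>
    ((Submodule.finrank_mono hle).trans (finrank_span_image_finset_le_card ℝ v M)).not_gt
      (hM.trans_lt hW)
  have horth : ∀ j ∈ S \ N, ¬ W ≤ (ℝ ∙ v j)ᗮ := by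
    intro j hj hle
    obtain ⟨hjS, hjN⟩ := Finset.mem_sdiff.mp hj
    have hvj : v j ∈ Submodule.span ℝ (v '' N) := by
      have := Submodule.orthogonal_le hle
      rw [Submodule.orthogonal_orthogonal, Submodule.orthogonal_orthogonal] at this
      exact this (Submodule.mem_span_singleton_self _)
    have := hv (insert j N) (Finset.insert_subset hjS hNS) (by grind [Finset.card_insert_le])
    rw [Finset.coe_insert, linearIndepOn_insert (by simpa using hjN)] at this
    exact this.2 hvj
  obtain ⟨w, hwW, hwT⟩ := W.exists_mem_forall_notMem_of_not_le
    ((S.powerset.filter (·.card ≤ k)).image (fun M : Finset ι => Submodule.span ℝ (v '' M)) ∪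
      (S \ N).image (fun j => (ℝ ∙ v j)ᗮ)) (by
    simp only [Finset.mem_union, Finset.mem_image, Finset.mem_filter]
    rintro U (⟨M, ⟨-, hM⟩, rfl⟩ | ⟨j, hj, rfl⟩)
    exacts [hspan M hM, horth j hj])
  refine ⟨w, fun j hj => ⟨fun h0 => ?_, fun hjN => ?_⟩, fun M hMS hM => ?_⟩
  · by_contra hjN
    exact hwT _ (Finset.mem_union_right _ (Finset.mem_image_of_mem _ (by simp [hj, hjN])))
      (Submodule.mem_orthogonal_singleton_iff_inner_left.mpr h0)
  · exact (Submodule.mem_orthogonal' _ _).mp hwW _ (Submodule.subset_span ⟨j, hjN, rfl⟩)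
  · exact hwT _ (Finset.mem_union_left _ (Finset.mem_image_of_mem _ (by simp [hMS, hM])))

theorem Matrix.rank_gram_le_finrank [Fintype ι] (v : ι → E) :
    (Matrix.gram ℝ v).rank ≤ finrank ℝ E := by
  rw [Matrix.gram_eq_conjTranspose_mul (stdOrthonormalBasis ℝ E),
    Matrix.rank_conjTranspose_mul_self]
  exact (Matrix.rank_le_card_height _).trans (Fintype.card_fin _).le

theorem msr_compl_le_finrank {n : ℕ} (G : SimpleGraph (Fin n)) (v : Fin n → E)
    (hv : ∀ i j, i ≠ j → (⟪v i, v j⟫_ℝ = 0 ↔ G.Adj i j)) :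
    msr Gᶜ ≤ finrank ℝ E := by
  refine (Nat.sInf_le ?_).trans (Matrix.rank_gram_le_finrank v)
  refine ⟨_, Matrix.posSemidef_gram ℝ v, fun i j hij => ?_, rfl⟩
  simp [Matrix.gram_apply, hv i j hij, hij]

end InnerProductSpace

namespace SimpleGraph

variable {V : Type*} {G : SimpleGraph V}

def IsDegenerate (G : SimpleGraph V) [DecidableRel G.Adj] (k : ℕ) : Prop :=
  ∀ S : Finset V, S.Nonempty → ∃ x ∈ S, (S.filter (G.Adj x)).card ≤ k

def EachEdgeOnAtMostOneCycle (G : SimpleGraph V) : Prop :=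
  ∀ (u w : V) (p : G.Walk u u) (q : G.Walk w w), p.IsCycle → q.IsCycle →
    ∀ e ∈ p.edges, e ∈ q.edges → ∀ e', (e' ∈ p.edges ↔ e' ∈ q.edges)

open Walk

theorem exists_isPath_forall_adj_mem_support (S : Finset V) (hS : S.Nonempty) :
    ∃ (u w : V) (p : G.Walk u w), p.IsPath ∧ (∀ z ∈ p.support, z ∈ S) ∧
      ∀ y ∈ S, G.Adj u y → y ∈ p.support := by
  classical
  by_contra! hext
  have hlong : ∀ l : ℕ, ∃ (u w : V) (p : G.Walk u w),
      p.IsPath ∧ (∀ z ∈ p.support, z ∈ S) ∧ p.length = l := by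
    intro l
    induction l with
    | zero =>
      obtain ⟨x, hx⟩ := hS
      exact ⟨x, x, nil, .nil, by simpa using hx, rfl⟩
    | succ l ih =>
      obtain ⟨u, w, p, hp, hpS, rfl⟩ := ih
      obtain ⟨y, hyS, hadj, hy⟩ := hext u w p hp hpS
      refine ⟨y, w, cons hadj.symm p, hp.cons hy, ?_, rfl⟩
      simpa [hyS] using hpS
  obtain ⟨u, w, p, hp, hpS, hlen⟩ := hlong S.card
  have := Finset.card_le_card (s := p.support.toFinset) fun z hz => hpS z (by simpa using hz)
  rw [List.toFinset_card_of_nodup hp.support_nodup, length_support] at this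
  omega

theorem exists_isCycle_of_adj_mem_support {u v w y : V} (h : G.Adj u v) (q : G.Walk v w)
    (hp : (cons h q).IsPath) (hy : y ∈ q.support) (hyv : y ≠ v) (hady : G.Adj u y) :
    ∃ c : G.Walk u u, c.IsCycle ∧ s(u, v) ∈ c.edges ∧ s(u, y) ∈ c.edges ∧
      ∀ z, s(u, z) ∈ c.edges → z = y ∨ z = v := by
  classical
  set q' := q.takeUntil y hy
  have hu : u ∉ q'.support := fun hu =>
    ((cons_isPath_iff h q).mp hp).2 (q.support_takeUntil_subset_support hy hu)
  have hu_edge : ∀ z, s(u, z) ∉ q'.edges := fun z hz => hu (q'.fst_mem_support_of_mem_edges hz)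
  have hq' : (cons h q').IsPath := (((cons_isPath_iff h q).mp hp).1.takeUntil hy).cons hu
  refine ⟨cons hady (cons h q').reverse, ?_, by simp, by simp, fun z hz => ?_⟩
  · refine (cons_isCycle_iff _ hady).mpr ⟨hq'.reverse, ?_⟩
    simp [h.ne, hyv, hu_edge]
  · simpa [hu_edge, h.ne, hady.ne] using hz

theorem EachEdgeOnAtMostOneCycle.isDegenerate [DecidableRel G.Adj]
    (hG : G.EachEdgeOnAtMostOneCycle) : G.IsDegenerate 2 := by
  classical
  intro S hS
  obtain ⟨u, w, p, hp, hpS, hnbr⟩ := exists_isPath_forall_adj_mem_support (G := G) S hS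
  refine ⟨u, hpS u p.start_mem_support, ?_⟩
  cases p with
  | nil =>
    simp only [support_nil, List.mem_singleton] at hnbr
    simp [Finset.filter_eq_empty_iff.mpr fun y hyS (hadj : G.Adj u y) =>
      hadj.ne (hnbr y hyS hadj).symm]
  | @cons _ v _ h q =>
    have hunique : ∀ y ∈ (S.filter (G.Adj u)).erase v, ∀ z ∈ (S.filter (G.Adj u)).erase v,
        y = z := by
      simp only [Finset.mem_erase, Finset.mem_filter]
      rintro y ⟨hyv, hyS, hady⟩ z ⟨hzv, hzS, hadz⟩
      have hmem : ∀ x ∈ S, G.Adj u x → x ≠ v → x ∈ q.support := fun x hxS hadx hxv => by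
        simpa [hadx.ne.symm] using hnbr x hxS hadx
      obtain ⟨cy, hcy, hvy, -, hzy⟩ :=
        exists_isCycle_of_adj_mem_support h q hp (hmem y hyS hady hyv) hyv hady
      obtain ⟨cz, hcz, hvz, hz, -⟩ :=
        exists_isCycle_of_adj_mem_support h q hp (hmem z hzS hadz hzv) hzv hadz
      exact ((hzy z ((hG u u cy cz hcy hcz _ hvy hvz _).mpr hz)).resolve_right hzv).symm
    have := Finset.card_le_one.mpr hunique
    have := Finset.pred_card_le_card_erase (s := S.filter (G.Adj u)) (a := v)
    omega

theorem IsDegenerate.exists_orthogonal_representation {E : Type*} [NormedAddCommGroup E]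
    [InnerProductSpace ℝ E] [FiniteDimensional ℝ E] [DecidableEq V] [DecidableRel G.Adj]
    {k : ℕ} (hG : G.IsDegenerate k) (hE : 2 * k < finrank ℝ E) (S : Finset V) :
    ∃ v : V → E, (∀ i ∈ S, ∀ j ∈ S, i ≠ j → (⟪v i, v j⟫_ℝ = 0 ↔ G.Adj i j)) ∧
      ∀ M ⊆ S, M.card ≤ k + 1 → LinearIndepOn ℝ v (M : Set V) := by
  induction S using Finset.strongInduction with | H S ih => ?_
  rcases S.eq_empty_or_nonempty with rfl | hS
  · exact ⟨0, by simp, fun M hM _ => by simp [Finset.subset_empty.mp hM]⟩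
  obtain ⟨x, hxS, hx⟩ := hG S hS
  obtain ⟨v, hv_orth, hv_ind⟩ := ih _ (Finset.erase_ssubset hxS)
  obtain ⟨w, hw_orth, hw_span⟩ := exists_inner_eq_zero_iff_mem_and_notMem_span hE hv_ind
    (Finset.filter_subset (G.Adj x) _)
    ((Finset.card_le_card (Finset.filter_subset_filter _ (S.erase_subset x))).trans hx)
  have hw_adj : ∀ j ∈ S, j ≠ x → (⟪w, v j⟫_ℝ = 0 ↔ G.Adj x j) := fun j hj hjx => by
    simpa [hj, hjx] using hw_orth j (Finset.mem_erase.mpr ⟨hjx, hj⟩)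
  refine ⟨Function.update v x w, fun i hi j hj hij => ?_, ?_⟩
  · rcases eq_or_ne i x with rfl | hix
    · simpa [Function.update_of_ne hij.symm] using hw_adj j hj hij.symm
    rcases eq_or_ne j x with rfl | hjx
    · simpa [Function.update_of_ne hij, real_inner_comm, G.adj_comm] using hw_adj i hi hij
    simpa [Function.update_of_ne hix, Function.update_of_ne hjx] using
      hv_orth i (Finset.mem_erase.mpr ⟨hix, hi⟩) j (Finset.mem_erase.mpr ⟨hjx, hj⟩) hij
  · rw [← Finset.insert_erase hxS]
    exact linearIndepOn_update_insert (S.notMem_erase x) hv_ind hw_span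

end SimpleGraph

/-- If `G` is a cactus graph then `msr(Ḡ) ≤ 5`. -/
theorem msr_complement_le_five_of_cactus {n : ℕ}
    (G : SimpleGraph (Fin n)) (hG : IsCactus G) :
    msr Gᶜ ≤ 5 := by
  classical
  have hdeg : G.IsDegenerate 2 := SimpleGraph.EachEdgeOnAtMostOneCycle.isDegenerate hG.2
  obtain ⟨v, hv, -⟩ := hdeg.exists_orthogonal_representation
    (E := EuclideanSpace ℝ (Fin 5)) (by simp) Finset.univ
  simpa using msr_compl_le_finrank G v fun i j => hv i (by simp) j (by simp)
end

section
/- Let G = (V, E) be a cactus graph containing at least two cycles (equivalently, G is connected with |E| ≥ |V| + 1). Then the tree cover number of G satisfies T(G) ≥ 3. -/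
/-- The tree cover number of `G`: the minimum number of pairwise vertex-disjoint
induced subgraphs of `G`, each of which is a tree, whose vertex sets cover all
vertices of `G`. -/
noncomputable def treeCoverNumber {n : ℕ} (G : SimpleGraph (Fin n)) : ℕ :=
  sInf { k : ℕ | ∃ 𝒯 : Finset (Set (Fin n)), 𝒯.card = k ∧
    (∀ S ∈ 𝒯, (G.induce S).IsTree) ∧
    (𝒯 : Set (Set (Fin n))).PairwiseDisjoint id ∧
    (∀ v : Fin n, ∃ S ∈ 𝒯, v ∈ S) }

/-!
A single induced tree spanning `V` has `|V| - 1` edges. Two disjoint induced trees covering `V`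
together contain `|V| - 2` edges, so a graph with `|V| + 1` edges has at least three edges
`e₁, e₂, e₃` crossing between the two trees. Closing two crossing edges up with the tree paths
joining their ends gives a cycle whose only crossing edges are those two; the cycles through
`e₁, e₂` and through `e₂, e₃` then share `e₂` but not `e₁`, which a cactus forbids.
-/

namespace SimpleGraph

variable {V : Type*} {G : SimpleGraph V}

def EveryEdgeInAtMostOneCycle (G : SimpleGraph V) : Prop :=
  ∀ (u w : V) (p : G.Walk u u) (q : G.Walk w w), p.IsCycle → q.IsCycle →
    ∀ e ∈ p.edges, e ∈ q.edges → ∀ e', (e' ∈ p.edges ↔ e' ∈ q.edges)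

-- `treeCoverNumber G = sInf {k | ∃ 𝒯, 𝒯.card = k ∧ G.IsTreeCover 𝒯}` holds definitionally.
def IsTreeCover (G : SimpleGraph V) (𝒯 : Finset (Set V)) : Prop :=
  (∀ S ∈ 𝒯, (G.induce S).IsTree) ∧ (𝒯 : Set (Set V)).PairwiseDisjoint id ∧
    ∀ v, ∃ S ∈ 𝒯, v ∈ S

lemma ncard_edgeSet_inter_sym2 (S : Set V) :
    (G.edgeSet ∩ S.sym2).ncard = Nat.card (G.induce S).edgeSet := by
  rw [Nat.card_coe_set_eq, ← Set.ncard_image_of_injective _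
    (Sym2.map.injective Subtype.val_injective)]
  congr 1
  ext e
  induction e using Sym2.ind with
  | _ x y =>
    simp only [Set.mem_inter_iff, mem_edgeSet, Set.mk_mem_sym2_iff, Set.mem_image, Sym2.exists,
      comap_adj, Function.Embedding.coe_subtype, Sym2.map_mk, Sym2.eq_iff]
    constructor
    · rintro ⟨h, hx, hy⟩
      exact ⟨⟨x, hx⟩, ⟨y, hy⟩, h, .inl ⟨rfl, rfl⟩⟩
    · rintro ⟨⟨a, ha⟩, ⟨b, hb⟩, h, ⟨rfl, rfl⟩ | ⟨rfl, rfl⟩⟩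
      exacts [⟨h, ha, hb⟩, ⟨h.symm, hb, ha⟩]

lemma IsTree.ncard_edgeSet_inter_sym2_add_one [Finite V] {S : Set V} (h : (G.induce S).IsTree) :
    (G.edgeSet ∩ S.sym2).ncard + 1 = S.ncard := by
  rw [ncard_edgeSet_inter_sym2, ← Nat.card_coe_set_eq]
  exact (isTree_iff_connected_and_card.mp h).2

lemma Preconnected.exists_isPath_support_subset_of_induce {S : Set V}
    (h : (G.induce S).Preconnected) {a b : V} (ha : a ∈ S) (hb : b ∈ S) :
    ∃ p : G.Walk a b, p.IsPath ∧ ∀ v ∈ p.support, v ∈ S := by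
  obtain ⟨q, hq⟩ := (h ⟨a, ha⟩ ⟨b, hb⟩).exists_isPath
  have hsupp : ∀ v ∈ (q.map (Embedding.induce S).toHom).support, v ∈ S := by
    rintro v hv
    rw [Walk.support_map, List.mem_map] at hv
    obtain ⟨w, -, rfl⟩ := hv
    exact w.2
  exact ⟨_, hq.map (Embedding.induce (G := G) S).injective, hsupp⟩

lemma Walk.mem_sym2_of_support_subset {S : Set V} {u v : V} {p : G.Walk u v}
    (h : ∀ w ∈ p.support, w ∈ S) {e : Sym2 V} (he : e ∈ p.edges) : e ∈ S.sym2 := by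
  induction e using Sym2.ind with
  | _ x y =>
    exact ⟨h x (p.fst_mem_support_of_mem_edges he), h y (p.snd_mem_support_of_mem_edges he)⟩

lemma exists_isCycle_mem_edges_of_preconnected_induce {S₁ S₂ : Set V} (hd : Disjoint S₁ S₂)
    (h₁ : (G.induce S₁).Preconnected) (h₂ : (G.induce S₂).Preconnected)
    {a₁ b₁ a₂ b₂ : V} (ha₁ : a₁ ∈ S₁) (hb₁ : b₁ ∈ S₂) (ha₂ : a₂ ∈ S₁) (hb₂ : b₂ ∈ S₂)
    (hab₁ : G.Adj a₁ b₁) (hab₂ : G.Adj a₂ b₂) (hne : s(a₁, b₁) ≠ s(a₂, b₂)) :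
    ∃ c : G.Walk a₁ a₁, c.IsCycle ∧ s(a₁, b₁) ∈ c.edges ∧ s(a₂, b₂) ∈ c.edges ∧
      ∀ e ∈ c.edges, e = s(a₁, b₁) ∨ e = s(a₂, b₂) ∨ e ∈ S₁.sym2 ∨ e ∈ S₂.sym2 := by
  obtain ⟨p₂, hp₂, hs₂⟩ := h₂.exists_isPath_support_subset_of_induce hb₁ hb₂
  obtain ⟨p₁, hp₁, hs₁⟩ := h₁.exists_isPath_support_subset_of_induce ha₂ ha₁
  -- `q` runs from `b₁` through `S₂` to `b₂`, across to `a₂`, and through `S₁` to `a₁`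
  let q : G.Walk b₁ a₁ := p₂.append (.cons hab₂.symm p₁)
  have hq : q.IsPath := by
    rw [Walk.isPath_def, Walk.support_append, Walk.support_cons, List.tail_cons]
    exact hp₂.support_nodup.append hp₁.support_nodup
      fun v hv₂ hv₁ ↦ hd.notMem_of_mem_left (hs₁ v hv₁) (hs₂ v hv₂)
  have hq_edges : ∀ e ∈ q.edges, e = s(a₂, b₂) ∨ e ∈ S₁.sym2 ∨ e ∈ S₂.sym2 := by
    intro e he
    rw [Walk.edges_append, Walk.edges_cons, List.mem_append, List.mem_cons] at he
    rcases he with he | rfl | he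
    · exact .inr (.inr (Walk.mem_sym2_of_support_subset hs₂ he))
    · exact .inl Sym2.eq_swap
    · exact .inr (.inl (Walk.mem_sym2_of_support_subset hs₁ he))
  have hnot : s(a₁, b₁) ∉ q.edges := fun he ↦ by
    rcases hq_edges _ he with h | ⟨-, h⟩ | ⟨h, -⟩
    exacts [hne h, hd.notMem_of_mem_right hb₁ h, hd.notMem_of_mem_left ha₁ h]
  refine ⟨.cons hab₁ q, (Walk.cons_isCycle_iff q hab₁).mpr ⟨hq, hnot⟩, by simp, ?_, ?_⟩
  · simp [q, Sym2.eq_swap]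
  · intro e he
    rw [Walk.edges_cons, List.mem_cons] at he
    rcases he with rfl | he
    exacts [.inl rfl, .inr (hq_edges e he)]

lemma exists_adj_of_mem_edgeSet_diff_sym2 {S₁ S₂ : Set V} (hcov : S₁ ∪ S₂ = Set.univ)
    {e : Sym2 V} (he : e ∈ G.edgeSet \ (S₁.sym2 ∪ S₂.sym2)) :
    ∃ a ∈ S₁, ∃ b ∈ S₂, G.Adj a b ∧ e = s(a, b) := by
  have hmem (v : V) : v ∈ S₁ ∨ v ∈ S₂ := (Set.mem_union v S₁ S₂).mp (hcov.symm ▸ Set.mem_univ v)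
  induction e using Sym2.ind with
  | _ x y =>
    obtain ⟨hxy, hx⟩ := he
    simp only [Set.mem_union, Set.mk_mem_sym2_iff, not_or, not_and] at hx
    rcases hmem x with hx₁ | hx₂
    · exact ⟨x, hx₁, y, (hmem y).resolve_left (hx.1 hx₁), hxy, rfl⟩
    · exact ⟨y, (hmem y).resolve_right (hx.2 hx₂), x, hx₂, hxy.symm, Sym2.eq_swap⟩

lemma EveryEdgeInAtMostOneCycle.ncard_edgeSet_diff_sym2_le_two
    (hG : G.EveryEdgeInAtMostOneCycle) {S₁ S₂ : Set V} (hd : Disjoint S₁ S₂)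
    (hcov : S₁ ∪ S₂ = Set.univ) (h₁ : (G.induce S₁).Preconnected)
    (h₂ : (G.induce S₂).Preconnected) :
    (G.edgeSet \ (S₁.sym2 ∪ S₂.sym2)).ncard ≤ 2 := by
  by_contra! h
  obtain ⟨e₁, e₂, e₃, he₁, he₂, he₃, h₁₂, h₁₃, h₂₃⟩ :=
    (Set.two_lt_ncard_iff (Set.finite_of_ncard_pos (by omega))).mp h
  obtain ⟨a₁, ha₁, b₁, hb₁, hab₁, rfl⟩ := exists_adj_of_mem_edgeSet_diff_sym2 hcov he₁
  obtain ⟨a₂, ha₂, b₂, hb₂, hab₂, rfl⟩ := exists_adj_of_mem_edgeSet_diff_sym2 hcov he₂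
  obtain ⟨a₃, ha₃, b₃, hb₃, hab₃, rfl⟩ := exists_adj_of_mem_edgeSet_diff_sym2 hcov he₃
  obtain ⟨p, hp, hp₂, hp₁, -⟩ := exists_isCycle_mem_edges_of_preconnected_induce hd h₁ h₂
    ha₂ hb₂ ha₁ hb₁ hab₂ hab₁ h₁₂.symm
  obtain ⟨q, hq, hq₂, -, hq_edges⟩ := exists_isCycle_mem_edges_of_preconnected_induce hd h₁ h₂
    ha₂ hb₂ ha₃ hb₃ hab₂ hab₃ h₂₃
  rcases hq_edges _ ((hG _ _ p q hp hq _ hp₂ hq₂ _).mp hp₁) with h | h | ⟨-, h⟩ | ⟨h, -⟩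
  exacts [h₁₂ h, h₁₃ h, hd.notMem_of_mem_right hb₁ h, hd.notMem_of_mem_left ha₁ h]

lemma isTreeCover_image_singleton [Fintype V] [DecidableEq V] :
    G.IsTreeCover (Finset.univ.image fun v ↦ {v}) := by
  refine ⟨?_, ?_, fun v ↦ ⟨{v}, Finset.mem_image_of_mem _ (Finset.mem_univ v), rfl⟩⟩
  · simp only [Finset.mem_image, Finset.mem_univ, true_and, forall_exists_index,
      forall_apply_eq_imp_iff]
    exact fun v ↦ .of_subsingleton
  · simp only [Finset.coe_image, Finset.coe_univ, Set.image_univ]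
    rintro _ ⟨v, rfl⟩ _ ⟨w, rfl⟩ hvw
    exact Set.disjoint_singleton.mpr fun h ↦ hvw (h ▸ rfl)

lemma IsTreeCover.ncard_edgeSet_add_one_eq_of_eq_singleton [Finite V] {S : Set V}
    (h : G.IsTreeCover {S}) : G.edgeSet.ncard + 1 = Nat.card V := by
  have hS : S = Set.univ := Set.eq_univ_of_forall fun v ↦ by simpa using h.2.2 v
  subst hS
  simpa using (h.1 _ (Finset.mem_singleton_self _)).ncard_edgeSet_inter_sym2_add_one

lemma IsTreeCover.ncard_edgeSet_le_of_eq_pair [Finite V] (hG : G.EveryEdgeInAtMostOneCycle)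
    {S₁ S₂ : Set V} (hne : S₁ ≠ S₂) (h : G.IsTreeCover {S₁, S₂}) :
    G.edgeSet.ncard ≤ Nat.card V := by
  obtain ⟨htree, hdisj, hmem⟩ := h
  have h₁ := htree S₁ (by simp)
  have h₂ := htree S₂ (by simp)
  have hd : Disjoint S₁ S₂ := hdisj (by simp) (by simp) hne
  have hcov : S₁ ∪ S₂ = Set.univ := Set.eq_univ_of_forall fun v ↦ by simpa using hmem v
  have hsplit : G.edgeSet.ncard ≤ (G.edgeSet ∩ S₁.sym2).ncard + (G.edgeSet ∩ S₂.sym2).ncard +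
      (G.edgeSet \ (S₁.sym2 ∪ S₂.sym2)).ncard := by
    rw [← Set.ncard_inter_add_ncard_sdiff_eq_ncard G.edgeSet (S₁.sym2 ∪ S₂.sym2),
      Set.inter_union_distrib_left]
    grw [Set.ncard_union_le]
  have hV : S₁.ncard + S₂.ncard = Nat.card V := by
    rw [← Set.ncard_union_eq hd, hcov, Set.ncard_univ]
  have := h₁.ncard_edgeSet_inter_sym2_add_one
  have := h₂.ncard_edgeSet_inter_sym2_add_one
  have := hG.ncard_edgeSet_diff_sym2_le_two hd hcov h₁.connected.preconnected
    h₂.connected.preconnected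
  omega

lemma IsTreeCover.ncard_edgeSet_le_of_card_le_two [Finite V] (hG : G.EveryEdgeInAtMostOneCycle)
    {𝒯 : Finset (Set V)} (h : G.IsTreeCover 𝒯) (h𝒯 : 𝒯.card ≤ 2) :
    G.edgeSet.ncard ≤ Nat.card V := by
  interval_cases h𝒯' : 𝒯.card
  · have : IsEmpty V := ⟨fun v ↦ by simpa [Finset.card_eq_zero.mp h𝒯'] using h.2.2 v⟩
    simp [Set.eq_empty_of_isEmpty G.edgeSet]
  · obtain ⟨S, rfl⟩ := Finset.card_eq_one.mp h𝒯'
    have := h.ncard_edgeSet_add_one_eq_of_eq_singleton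
    omega
  · obtain ⟨S₁, S₂, hne, rfl⟩ := Finset.card_eq_two.mp h𝒯'
    exact h.ncard_edgeSet_le_of_eq_pair hG hne

end SimpleGraph

/-- A cactus graph with at least two cycles (equivalently, connected with
`|E| ≥ |V| + 1`) has tree cover number at least 3. -/
theorem treeCoverNumber_ge_three_of_cactus {n : ℕ}
    (G : SimpleGraph (Fin n)) [DecidableRel G.Adj] (hG : IsCactus G)
    (hE : n + 1 ≤ G.edgeFinset.card) :
    3 ≤ treeCoverNumber G := by
  refine le_csInf ⟨_, _, rfl, G.isTreeCover_image_singleton⟩ ?_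
  rintro k ⟨𝒯, rfl, h𝒯 : G.IsTreeCover 𝒯⟩
  by_contra! hk
  have := h𝒯.ncard_edgeSet_le_of_card_le_two hG.2 (by omega)
  rw [← SimpleGraph.coe_edgeFinset, Set.ncard_coe_finset, Nat.card_fin] at this
  omega
end
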